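/- Let an instance have jobs J = {1,…,n} with p_j > 0 and release times r'_j ≥ 0 satisfying r'_j ≤ r'_k whenever j ≺ k. Suppose there exist a set A ⊆ J and numbers S'_k ≥ 0 for k ∈ A such that: (b) r'_k ≥ S'_k for every k ∈ A; (c) r'_j ≥ p_j for every j ∉ A; and (e) for every j ∈ J and every k ∈ A, r'_j ∉ (S'_k, S'_k + p_k). Let real numbers (C_j)_{j∈J} satisfy the parallel inequalities (with respect to the release times r') with C_1 ≤ C_2 ≤ … ≤ C_n, and let σ be a feasible schedule (with respect to r') having the list-scheduling property for the index order 1,…,n. Then C^σ_j ≤ 2·C_j for every job j, and hence Σ_j w_j C^σ_j ≤ 2·Σ_j w_j C_j. -/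

import Mathlib

/-!
Fix a job `j` and let `t` be the earliest start time from which the machine works without idling
until `j` completes, running only jobs of index `≤ j` that start at or after `t`. These jobs `W`
fill `[t, C^σ_j)`, so `C^σ_j ≤ t + p(W)`, and the parallel inequality for `W` together with the
monotonicity of `C` gives `r'_m + p(W)/2 ≤ C_j` for some `m ∈ W`. It remains to see `t ≤ 2 r'_m`
for every `m ∈ W`, which is where list scheduling enters. If no job ends at `t`, the machine idles
just before `t`, so no job of `W` is released before `t`. Otherwise the job `k` ending at `t` has
index `> j` and was preferred to the jobs of `W` at time `S_k`, so these are released after `S_k`;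
conditions (b), (c), (e) then force `r'_m ≥ p_k`, whence `t = S_k + p_k ≤ 2 r'_m`.
-/

open Finset Filter Topology MeasureTheory

theorem sub_le_sum_of_Ico_subset_biUnion {ι : Type*} {U : Finset ι} {a b : ℝ} (x len : ι → ℝ)
    (hlen : ∀ i ∈ U, 0 ≤ len i) (h : Set.Ico a b ⊆ ⋃ i ∈ U, Set.Ico (x i) (x i + len i)) :
    b - a ≤ ∑ i ∈ U, len i := by
  rw [← ENNReal.ofReal_le_ofReal_iff (sum_nonneg hlen), ENNReal.ofReal_sum_of_nonneg hlen,
    ← Real.volume_Ico]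
  calc volume (Set.Ico a b) ≤ volume (⋃ i ∈ U, Set.Ico (x i) (x i + len i)) := measure_mono h
    _ ≤ ∑ i ∈ U, volume (Set.Ico (x i) (x i + len i)) := measure_biUnion_finset_le U _
    _ = ∑ i ∈ U, ENNReal.ofReal (len i) := by simp only [Real.volume_Ico, add_sub_cancel_left]

section ListScheduling

variable {ι : Type*} [LinearOrder ι]

section

variable (p r S : ι → ℝ) (prec : ι → ι → Prop)

def MachineFree (t : ℝ) : Prop := ∀ h, S h + p h ≤ t ∨ t ≤ S h

def Available (t : ℝ) (j : ι) : Prop := r j ≤ t ∧ t ≤ S j ∧ ∀ k, prec k j → S k + p k ≤ t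

def HasListSchedulingProperty : Prop :=
  ∀ t, MachineFree p S t → ∀ j, Available p r S prec t j →
    (∀ k, Available p r S prec t k → j ≤ k) → S j = t

def BusyPrefix (j : ι) (t : ℝ) : Prop :=
  ∀ τ ∈ Set.Ico t (S j + p j), ∃ m ≤ j, t ≤ S m ∧ τ ∈ Set.Ico (S m) (S m + p m)

noncomputable def prefixJobs [Fintype ι] (j : ι) (t : ℝ) : Finset ι :=
  univ.filter fun m => m ≤ j ∧ t ≤ S m ∧ S m < S j + p j

end

variable {p r S : ι → ℝ} {prec : ι → ι → Prop}

@[simp]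
theorem mem_prefixJobs [Fintype ι] {j m : ι} {t : ℝ} :
    m ∈ prefixJobs p S j t ↔ m ≤ j ∧ t ≤ S m ∧ S m < S j + p j := by
  simp [prefixJobs]

theorem injective_start (hp : ∀ j, 0 < p j)
    (hdisj : ∀ j k, j ≠ k → S k + p k ≤ S j ∨ S j + p j ≤ S k) : Function.Injective S := by
  intro a b hab
  by_contra hne
  rcases hdisj a b hne with h | h <;> linarith [hp a, hp b]

theorem machineFree_start (hp : ∀ j, 0 < p j)
    (hdisj : ∀ j k, j ≠ k → S k + p k ≤ S j ∨ S j + p j ≤ S k) (k : ι) :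
    MachineFree p S (S k) := by
  intro h
  by_cases hhk : h = k
  · exact Or.inr (congrArg S hhk).ge
  · rcases hdisj h k hhk with h' | h'
    · exact Or.inr (by linarith [hp k])
    · exact Or.inl h'

theorem exists_le_start_eq_of_available [Fintype ι] (hLS : HasListSchedulingProperty p r S prec)
    {t : ℝ} (hfree : MachineFree p S t) {m : ι} (hm : Available p r S prec t m) :
    ∃ k ≤ m, S k = t := by
  classical
  set F := univ.filter (Available p r S prec t)
  have hmF : m ∈ F := mem_filter.2 ⟨mem_univ _, hm⟩
  exact ⟨F.min' ⟨m, hmF⟩, F.min'_le m hmF, hLS t hfree _ (mem_filter.1 (F.min'_mem _)).2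
    fun k hk => F.min'_le k (mem_filter.2 ⟨mem_univ _, hk⟩)⟩

/-- Had `m` been available at the free time `s`, list scheduling would have started a job of
index `≤ m` at `s`. -/
theorem lt_release_of_machineFree [Fintype ι] (hprec_lt : ∀ j k, prec j k → j < k)
    (hrcons : ∀ j k, prec j k → r j ≤ r k) (hLS : HasListSchedulingProperty p r S prec)
    {s : ℝ} {W : Set ι} (hfree : MachineFree p S s) (hstart : ∀ m ∈ W, s ≤ S m)
    (hclosed : ∀ m ∈ W, ∀ l, prec l m → s < S l + p l → l ∈ W)
    (hlate : ∀ k, S k = s → ∀ m ∈ W, m < k) (m : ι) (hm : m ∈ W) : s < r m := by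
  induction m using WellFoundedLT.induction with
  | _ m ih =>
  by_contra! hrm
  by_cases hpred : ∃ l, prec l m ∧ s < S l + p l
  · obtain ⟨l, hlm, hl⟩ := hpred
    exact hrm.not_gt ((ih l (hprec_lt l m hlm) (hclosed m hm l hlm hl)).trans_le (hrcons l m hlm))
  · push Not at hpred
    obtain ⟨k, hkm, hk⟩ := exists_le_start_eq_of_available hLS hfree ⟨hrm, hstart m hm, hpred⟩
    exact (hlate k hk m hm).not_ge hkm

theorem busyPrefix_start_self (j : ι) : BusyPrefix p S j (S j) :=
  fun _ hτ => ⟨j, le_rfl, le_rfl, hτ⟩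

theorem BusyPrefix.of_end_eq (hp : ∀ j, 0 < p j) {j k : ι} {t : ℝ} (h : BusyPrefix p S j t)
    (hkj : k ≤ j) (hk : S k + p k = t) : BusyPrefix p S j (S k) := by
  intro τ hτ
  by_cases hτt : τ < t
  · exact ⟨k, hkj, le_rfl, hτ.1, hk ▸ hτt⟩
  · obtain ⟨m, hmj, htm, hτm⟩ := h τ ⟨not_lt.1 hτt, hτ.2⟩
    exact ⟨m, hmj, by linarith [hp k], hτm⟩

theorem BusyPrefix.completion_le [Fintype ι] (hp : ∀ j, 0 < p j) {j : ι} {t : ℝ}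
    (h : BusyPrefix p S j t) : S j + p j ≤ t + ∑ m ∈ prefixJobs p S j t, p m := by
  have hcover := sub_le_sum_of_Ico_subset_biUnion S p (fun m _ => (hp m).le) fun τ hτ => by
    obtain ⟨m, hmj, htm, hτm⟩ := h τ hτ
    exact Set.mem_iUnion₂.2 ⟨m, mem_prefixJobs.2 ⟨hmj, htm, hτm.1.trans_lt hτ.2⟩, hτm⟩
  linarith

theorem mem_prefixJobs_of_prec [Fintype ι] (hp : ∀ j, 0 < p j)
    (hprec_lt : ∀ j k, prec j k → j < k) (hprecS : ∀ j k, prec j k → S j + p j ≤ S k)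
    {j l m : ι} {t : ℝ} (hm : m ∈ prefixJobs p S j t) (hlm : prec l m) (htl : t ≤ S l) :
    l ∈ prefixJobs p S j t := by
  rw [mem_prefixJobs] at hm ⊢
  exact ⟨(hprec_lt l m hlm).le.trans hm.1, htl, by linarith [hp l, hprecS l m hlm, hm.2.2]⟩

theorem lt_release_of_end_eq [Fintype ι] (hp : ∀ j, 0 < p j)
    (hdisj : ∀ j k, j ≠ k → S k + p k ≤ S j ∨ S j + p j ≤ S k)
    (hprec_lt : ∀ j k, prec j k → j < k) (hrcons : ∀ j k, prec j k → r j ≤ r k)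
    (hprecS : ∀ j k, prec j k → S j + p j ≤ S k) (hLS : HasListSchedulingProperty p r S prec)
    {j k : ι} {t : ℝ} (hk : S k + p k = t) (hjk : j < k) :
    ∀ m ∈ prefixJobs p S j t, S k < r m := by
  refine fun m hm => lt_release_of_machineFree hprec_lt hrcons hLS (machineFree_start hp hdisj k)
    (W := ↑(prefixJobs p S j t)) ?_ ?_ ?_ m (mem_coe.2 hm)
  · intro m hm
    linarith [hp k, (mem_prefixJobs.1 hm).2.1]
  · intro m hm l hlm hl
    refine mem_prefixJobs_of_prec hp hprec_lt hprecS hm hlm ?_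
    have hlk : l ≠ k := ((hprec_lt l m hlm).trans_le (mem_prefixJobs.1 hm).1).trans hjk |>.ne
    rcases hdisj l k hlk with h | h <;> linarith
  · intro k' hk' m hm
    rw [injective_start hp hdisj hk']
    exact (mem_prefixJobs.1 hm).1.trans_lt hjk

theorem le_release_of_idle [Fintype ι] (hp : ∀ j, 0 < p j)
    (hprec_lt : ∀ j k, prec j k → j < k) (hrcons : ∀ j k, prec j k → r j ≤ r k)
    (hprecS : ∀ j k, prec j k → S j + p j ≤ S k) (hLS : HasListSchedulingProperty p r S prec)
    {j : ι} {t : ℝ} (hidle : ∀ k, t ≤ S k ∨ S k + p k < t) :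
    ∀ m ∈ prefixJobs p S j t, t ≤ r m := by
  intro m hm
  -- every `s` slightly below `t` is a free time at which no job starts
  have hnear : ∀ᶠ s in 𝓝[<] t, s < t ∧ ∀ k, S k + p k < t → S k + p k < s := by
    refine eventually_mem_nhdsWithin.and (eventually_all.2 fun k => ?_)
    by_cases hk : S k + p k < t
    · exact (lt_mem_nhds hk).filter_mono nhdsWithin_le_nhds |>.mono fun _ h _ => h
    · exact .of_forall fun _ h => absurd h hk
  refine le_of_tendsto (tendsto_nhdsWithin_of_tendsto_nhds tendsto_id)
    (hnear.mono fun s ⟨hst, hs⟩ => ?_)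
  refine (lt_release_of_machineFree hprec_lt hrcons hLS (s := s) (W := ↑(prefixJobs p S j t))
    ?_ ?_ ?_ ?_ m (mem_coe.2 hm)).le
  · intro h
    rcases hidle h with h' | h'
    · exact Or.inr (by linarith)
    · exact Or.inl (hs h h').le
  · intro m hm
    linarith [(mem_prefixJobs.1 hm).2.1]
  · intro m hm l hlm hl
    refine mem_prefixJobs_of_prec hp hprec_lt hprecS hm hlm ((hidle l).resolve_right fun h' => ?_)
    linarith [hs l h']
  · intro k hk
    rcases hidle k with h' | h'
    · linarith
    · linarith [hs k h', hp k]

theorem exists_release_add_half_sum_le {C : ι → ℝ} {U : Finset ι} (hU : U.Nonempty)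
    (hp : ∀ j, 0 < p j) (hC : Monotone C)
    (hLP : U.inf' hU r * ∑ m ∈ U, p m + (∑ m ∈ U, p m) ^ 2 / 2 ≤ ∑ m ∈ U, p m * C m)
    {j : ι} (hUj : ∀ m ∈ U, m ≤ j) : ∃ m ∈ U, r m + (∑ m ∈ U, p m) / 2 ≤ C j := by
  obtain ⟨m, hm, hinf⟩ := U.exists_mem_eq_inf' hU r
  refine ⟨m, hm, le_of_mul_le_mul_right ?_ (sum_pos (fun i _ => hp i) hU)⟩
  have hCj : ∑ i ∈ U, p i * C i ≤ (∑ i ∈ U, p i) * C j := by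
    rw [sum_mul]
    exact sum_le_sum fun i hi => mul_le_mul_of_nonneg_left (hC (hUj i hi)) (hp i).le
  rw [hinf] at hLP
  linarith

theorem completion_le_two_mul [Fintype ι] {C : ι → ℝ} (hp : ∀ j, 0 < p j) (hr : ∀ j, 0 ≤ r j)
    (hprec_lt : ∀ j k, prec j k → j < k) (hrcons : ∀ j k, prec j k → r j ≤ r k)
    (hpr : ∀ k m, S k < r m → p k ≤ r m) (hC : Monotone C)
    (hLP : ∀ (U : Finset ι) (hU : U.Nonempty),
      U.inf' hU r * ∑ j ∈ U, p j + (∑ j ∈ U, p j) ^ 2 / 2 ≤ ∑ j ∈ U, p j * C j)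
    (hdisj : ∀ j k, j ≠ k → S k + p k ≤ S j ∨ S j + p j ≤ S k)
    (hprecS : ∀ j k, prec j k → S j + p j ≤ S k) (hLS : HasListSchedulingProperty p r S prec)
    (j : ι) : S j + p j ≤ 2 * C j := by
  classical
  obtain ⟨k₀, hk₀, hmin⟩ := (univ.filter fun k => BusyPrefix p S j (S k)).exists_min_image S
    ⟨j, mem_filter.2 ⟨mem_univ _, busyPrefix_start_self j⟩⟩
  have hbusy : BusyPrefix p S j (S k₀) := (mem_filter.1 hk₀).2
  have hjW : j ∈ prefixJobs p S j (S k₀) := mem_prefixJobs.2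
    ⟨le_rfl, hmin j (mem_filter.2 ⟨mem_univ _, busyPrefix_start_self j⟩), by linarith [hp j]⟩
  have hrelease : ∀ m ∈ prefixJobs p S j (S k₀), S k₀ ≤ 2 * r m := by
    by_cases hend : ∃ k, S k + p k = S k₀
    · obtain ⟨k, hk⟩ := hend
      have hjk : j < k := lt_of_not_ge fun hkj => by
        linarith [hp k, hmin k (mem_filter.2 ⟨mem_univ _, hbusy.of_end_eq hp hkj hk⟩)]
      intro m hm
      have hkm := lt_release_of_end_eq hp hdisj hprec_lt hrcons hprecS hLS hk hjk m hm
      linarith [hpr k m hkm]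
    · have hidle : ∀ k, S k₀ ≤ S k ∨ S k + p k < S k₀ := by
        intro k
        by_cases hkk₀ : k = k₀
        · exact Or.inl (congrArg S hkk₀).ge
        · rcases hdisj k k₀ hkk₀ with h | h
          · exact Or.inl (by linarith [hp k₀])
          · exact Or.inr (h.lt_of_ne fun h' => hend ⟨k, h'⟩)
      intro m hm
      linarith [le_release_of_idle hp hprec_lt hrcons hprecS hLS hidle m hm, hr m]
  obtain ⟨m, hm, hmC⟩ := exists_release_add_half_sum_le ⟨j, hjW⟩ hp hC (hLP _ ⟨j, hjW⟩)
    fun i hi => (mem_prefixJobs.1 hi).1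
  linarith [hbusy.completion_le hp, hrelease m hm]

end ListScheduling

theorem proc_le_release_of_start_lt {ι : Type*} {p r S S' : ι → ℝ} {A : Finset ι}
    (hS'nonneg : ∀ k ∈ A, 0 ≤ S' k) (hb : ∀ k ∈ A, S' k ≤ r k) (hc : ∀ j, j ∉ A → p j ≤ r j)
    (he : ∀ j, ∀ k ∈ A, r j ∉ Set.Ioo (S' k) (S' k + p k)) (hrel : ∀ j, r j ≤ S j)
    {k m : ι} (h : S k < r m) : p k ≤ r m := by
  by_cases hk : k ∈ A
  · have : S' k + p k ≤ r m :=
      not_lt.1 fun hlt => he m k hk ⟨by linarith [hb k hk, hrel k], hlt⟩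
    linarith [hS'nonneg k hk]
  · linarith [hc k hk, hrel k]

theorem bounded_instance_two_approx_general
    {n : ℕ} (p r' w C : Fin n → ℝ) (prec : Fin n → Fin n → Prop)
    (hp : ∀ j, 0 < p j) (hr' : ∀ j, 0 ≤ r' j) (hw : ∀ j, 0 ≤ w j)
    (hprec_lt : ∀ j k, prec j k → j < k)
    (hrcons : ∀ j k, prec j k → r' j ≤ r' k)
    (A : Finset (Fin n)) (S' : Fin n → ℝ)
    (hS'nonneg : ∀ k ∈ A, 0 ≤ S' k)
    (hb : ∀ k ∈ A, S' k ≤ r' k)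
    (hc : ∀ j, j ∉ A → p j ≤ r' j)
    (he : ∀ j : Fin n, ∀ k ∈ A, r' j ∉ Set.Ioo (S' k) (S' k + p k))
    (hCmono : ∀ j k : Fin n, j ≤ k → C j ≤ C k)
    (hLP : ∀ (U : Finset (Fin n)) (hU : U.Nonempty),
      U.inf' hU r' * ∑ j ∈ U, p j + (∑ j ∈ U, p j) ^ 2 / 2 ≤ ∑ j ∈ U, p j * C j)
    (S : Fin n → ℝ)
    (hrel : ∀ j, r' j ≤ S j)
    (hdisj : ∀ j k, j ≠ k → S k + p k ≤ S j ∨ S j + p j ≤ S k)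
    (hprecS : ∀ j k, prec j k → S j + p j ≤ S k)
    (hLS : ∀ t : ℝ, (∀ h, S h + p h ≤ t ∨ t ≤ S h) →
      ∀ j, (r' j ≤ t ∧ t ≤ S j ∧ ∀ k, prec k j → S k + p k ≤ t) →
        (∀ k, (r' k ≤ t ∧ t ≤ S k ∧ ∀ l, prec l k → S l + p l ≤ t) → j ≤ k) →
        S j = t) :
    (∀ j, S j + p j ≤ 2 * C j) ∧
    ∑ j, w j * (S j + p j) ≤ 2 * ∑ j, w j * C j := by
  have hbound : ∀ j, S j + p j ≤ 2 * C j :=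
    completion_le_two_mul hp hr' hprec_lt hrcons
      (fun _ _ => proc_le_release_of_start_lt hS'nonneg hb hc he hrel) hCmono
      hLP hdisj hprecS hLS
  refine ⟨hbound, ?_⟩
  rw [mul_sum]
  exact sum_le_sum fun j _ => by linarith [mul_le_mul_of_nonneg_left (hbound j) (hw j)]

/-- Theorem 3 of the paper: Suppose the (adjusted) release times `r'`
are consistent with the precedence order and there are a set `A` of (guessed early)
jobs and times `S' k ≥ 0` for `k ∈ A` such that: (b) `r' k ≥ S' k` for `k ∈ A`;
(c) `r' j ≥ p j` for `j ∉ A`; and (e) no release time lies in the open interval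
`(S' k, S' k + p k)` for any `k ∈ A`. If `C` satisfies the parallel inequalities with
`C₁ ≤ … ≤ Cₙ` and `σ` is a feasible schedule with the list-scheduling property for the
index order, then `C^σ_j ≤ 2 C_j` for every job, and hence
`Σ_j w_j C^σ_j ≤ 2 Σ_j w_j C_j`. -/
theorem bounded_instance_two_approx
    {n : ℕ} (p r' w C : Fin n → ℝ) (prec : Fin n → Fin n → Prop)
    (hp : ∀ j, 0 < p j) (hr' : ∀ j, 0 ≤ r' j) (hw : ∀ j, 0 ≤ w j)
    (hprec_lt : ∀ j k, prec j k → j < k)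
    (htrans : ∀ i j k, prec i j → prec j k → prec i k)
    (hrcons : ∀ j k, prec j k → r' j ≤ r' k)
    (A : Finset (Fin n)) (S' : Fin n → ℝ)
    (hS'nonneg : ∀ k ∈ A, 0 ≤ S' k)
    (hb : ∀ k ∈ A, S' k ≤ r' k)
    (hc : ∀ j, j ∉ A → p j ≤ r' j)
    (he : ∀ j : Fin n, ∀ k ∈ A, r' j ∉ Set.Ioo (S' k) (S' k + p k))
    (hCmono : ∀ j k : Fin n, j ≤ k → C j ≤ C k)
    (hLP : ∀ (U : Finset (Fin n)) (hU : U.Nonempty),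
      U.inf' hU r' * ∑ j ∈ U, p j + (∑ j ∈ U, p j) ^ 2 / 2 ≤ ∑ j ∈ U, p j * C j)
    (S : Fin n → ℝ)
    (hrel : ∀ j, r' j ≤ S j)
    (hdisj : ∀ j k, j ≠ k → S k + p k ≤ S j ∨ S j + p j ≤ S k)
    (hprecS : ∀ j k, prec j k → S j + p j ≤ S k)
    (hLS : ∀ t : ℝ, (∀ h, S h + p h ≤ t ∨ t ≤ S h) →
      ∀ j, (r' j ≤ t ∧ t ≤ S j ∧ ∀ k, prec k j → S k + p k ≤ t) →
        (∀ k, (r' k ≤ t ∧ t ≤ S k ∧ ∀ l, prec l k → S l + p l ≤ t) → j ≤ k) →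
        S j = t) :
    (∀ j, S j + p j ≤ 2 * C j) ∧
    ∑ j, w j * (S j + p j) ≤ 2 * ∑ j, w j * C j :=
  bounded_instance_two_approx_general p r' w C prec hp hr' hw hprec_lt hrcons A S' hS'nonneg hb hc
    he hCmono hLP S hrel hdisj hprecS hLS
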